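/- arXiv:2605.18364 — 5 statements merged into one kernel-verified Lean document; each statement's English description precedes it below -/
import Mathlib

section
/- For every x ∈ ℝ^d there exists γ_x > 0 such that for every γ ≥ γ_x the singleton {x_*} belongs to S_f^γ(x), i.e. {x_*} is a minimizer of M ↦ V_x(M) over 𝓜. -/
open MeasureTheory Filter Topology Metric Set Bornology
open scoped ENNReal NNReal Classical

noncomputable section

/-- `ℝ^d` as a Euclidean space. -/
abbrev Euc (d : ℕ) : Type := EuclideanSpace ℝ (Fin d)

/-- The family `𝓜` of connected components of local minimizers of `f`: connected sets `M`
for which there is an open `𝒱` with `M ⊊ 𝒱`, `M = argmin_{𝒱} f`, and `f > f(M)` on `𝒱 ∖ M`. -/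
def MinComps {d : ℕ} (f : Euc d → ℝ) : Set (Set (Euc d)) :=
  {M | IsConnected M ∧ ∃ V : Set (Euc d), IsOpen V ∧ M ⊂ V ∧
    M = {y | y ∈ V ∧ ∀ z ∈ V, f y ≤ f z} ∧ ∀ y ∈ V \ M, ∀ m ∈ M, f m < f y}

/-- `𝓜_* = ⋃_{M ∈ 𝓜} M`. -/
def MStar {d : ℕ} (f : Euc d → ℝ) : Set (Euc d) := ⋃ M ∈ MinComps f, M

/-- The attractor `Att(M) = {y : T_f(y) ∈ M}` of a component under the local solver `T_f`. -/
def Att {d : ℕ} (Tf : Euc d → Euc d) (M : Set (Euc d)) : Set (Euc d) := {y | Tf y ∈ M}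

/-- `f(M)`, the (constant) value of `f` on a component `M`. -/
def fVal {d : ℕ} (f : Euc d → ℝ) (M : Set (Euc d)) : ℝ := sInf (f '' M)

/-- The potential `V_x(M) = f(M) + (1/(2γ))·dist(x, closure(Att(M)))²`. -/
def Vx {d : ℕ} (f : Euc d → ℝ) (Tf : Euc d → Euc d) (x : Euc d) (γ : ℝ)
    (M : Set (Euc d)) : ℝ :=
  fVal f M + 1 / (2 * γ) * infDist x (closure (Att Tf M)) ^ 2

/-- `S_f^γ(x) = argmin_{M ∈ 𝓜} V_x(M)`. -/
def Sgamma {d : ℕ} (f : Euc d → ℝ) (Tf : Euc d → Euc d) (x : Euc d) (γ : ℝ) :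
    Set (Set (Euc d)) :=
  {M | M ∈ MinComps f ∧ ∀ Q ∈ MinComps f, Vx f Tf x γ M ≤ Vx f Tf x γ Q}

/-- The Gaussian measure `𝒩(x, s·Id)` on `ℝ^d`, given through its Lebesgue density. -/
def gaussMeasure {d : ℕ} (x : Euc d) (s : ℝ) : Measure (Euc d) :=
  volume.withDensity fun y =>
    ENNReal.ofReal ((2 * Real.pi * s) ^ (-(d : ℝ) / 2) * Real.exp (-‖y - x‖ ^ 2 / (2 * s)))

/-- The exact-expectation weighted barycenter
`m_{δ,γ} = E[T_f(Y_δ) e^{-f(T_f(Y_δ))/δ}] / E[e^{-f(T_f(Y_δ))/δ}]` for `Y_δ ∼ 𝒩(x, δγ Id)`. -/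
def bary {d : ℕ} (f : Euc d → ℝ) (Tf : Euc d → Euc d) (x : Euc d) (δ γ : ℝ) : Euc d :=
  (∫ y, Real.exp (-f (Tf y) / δ) ∂gaussMeasure x (δ * γ))⁻¹ •
    ∫ y, Real.exp (-f (Tf y) / δ) • Tf y ∂gaussMeasure x (δ * γ)

/-- Lemma 3.2: for `γ` large enough, `{x_*} ∈ S_f^γ(x)`. -/
theorem pbh_stmt_1 {d : ℕ} (hd : 1 ≤ d) (f : Euc d → ℝ)
    (hf_cont : Continuous f) (hf_coercive : Tendsto f (cocompact (Euc d)) atTop)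
    (h_borel : ∀ M ∈ MinComps f, MeasurableSet M)
    (h_bdd : ∀ M ∈ MinComps f, IsBounded M)
    (h_locfin : ∀ K : Set (Euc d), IsCompact K → {M | M ∈ MinComps f ∧ (M ∩ K).Nonempty}.Finite)
    (Tf : Euc d → Euc d) (hTf_meas : Measurable Tf)
    (hTf_ae : ∀ᵐ y : Euc d, Tf y ∈ MStar f)
    (hS : ∀ (z : Euc d) (γ : ℝ), 0 < γ →
      (Sgamma f Tf z γ).Nonempty ∧ IsBounded (⋃ M ∈ Sgamma f Tf z γ, M))
    (xstar : Euc d) (h_glob : ∀ y, f xstar ≤ f y)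
    (h_uniq : ∀ y, f y = f xstar → y = xstar)
    (h_xstar : {xstar} ∈ MinComps f)
    (μ : ℝ) (hμ : 0 < μ)
    (h_gap : ∀ M ∈ MinComps f, M ≠ {xstar} → f xstar + μ < fVal f M)
    (x : Euc d) :
    ∃ γx : ℝ, 0 < γx ∧ ∀ γ : ℝ, γx ≤ γ → {xstar} ∈ Sgamma f Tf x γ := by
  set D := infDist x (closure (Att Tf ({xstar} : Set (Euc d)))) with hDdef
  have hD0 : 0 ≤ D := infDist_nonneg
  refine ⟨max 1 (D ^ 2 / (2 * μ)), lt_of_lt_of_le one_pos (le_max_left _ _), ?_⟩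
  intro γ hγ
  have hγ1 : (1 : ℝ) ≤ γ := le_trans (le_max_left _ _) hγ
  have hγ0 : (0 : ℝ) < γ := lt_of_lt_of_le one_pos hγ1
  have hfval : fVal f ({xstar} : Set (Euc d)) = f xstar := by
    simp [fVal]
  refine ⟨h_xstar, ?_⟩
  intro Q hQ
  by_cases hQeq : Q = {xstar}
  · subst hQeq; exact le_refl _
  · have hterm : 1 / (2 * γ) * D ^ 2 ≤ μ := by
      have h2 : D ^ 2 / (2 * μ) ≤ γ := le_trans (le_max_right _ _) hγ
      rw [div_le_iff₀ (by positivity)] at h2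
      rw [div_mul_eq_mul_div, one_mul, div_le_iff₀ (by positivity)]
      nlinarith
    have key : Vx f Tf x γ ({xstar} : Set (Euc d)) ≤ f xstar + μ := by
      simp only [Vx, hfval, ← hDdef]
      linarith
    have h1 : f xstar + μ < fVal f Q := h_gap Q hQ hQeq
    have h2 : 0 ≤ 1 / (2 * γ) * infDist x (closure (Att Tf Q)) ^ 2 := by positivity
    have hQv : f xstar + μ ≤ Vx f Tf x γ Q := by
      simp only [Vx]; linarith
    linarith
end
end

section
/- Let x ∈ ℝ^d, δ, γ > 0, let y₁, y₂, … be i.i.d. samples from Y_δ ∼ 𝒩(x, δγ Id), and define m_{N,δ,γ} := (Σ_{i=1}^N T_f(y_i)·e^{−f(T_f(y_i))/δ}) / (Σ_{i=1}^N e^{−f(T_f(y_i))/δ}) and m_{δ,γ} := E[T_f(Y_δ)·e^{−f(T_f(Y_δ))/δ}] / E[e^{−f(T_f(Y_δ))/δ}]. Suppose there exists M ∈ 𝓜 such that m_{δ,γ} ∈ interior(Att(M)) with dist(m_{δ,γ}, ∂Att(M)) > 0. Then, almost surely, T_f(m_{N,δ,γ}) → T_f(m_{δ,γ}) as N → ∞.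 -/
open MeasureTheory Filter Topology Metric Set Bornology
open scoped ENNReal NNReal Classical

noncomputable section

/-- The empirical weighted barycenter
`m_{N,δ,γ} = (Σ_{i<N} T_f(y_i) e^{-f(T_f(y_i))/δ}) / (Σ_{i<N} e^{-f(T_f(y_i))/δ})`. -/
def baryN {d : ℕ} {Ω : Type*} (f : Euc d → ℝ) (Tf : Euc d → Euc d) (δ : ℝ)
    (y : ℕ → Ω → Euc d) (N : ℕ) (ω : Ω) : Euc d :=
  (∑ i ∈ Finset.range N, Real.exp (-f (Tf (y i ω)) / δ))⁻¹ •
    ∑ i ∈ Finset.range N, Real.exp (-f (Tf (y i ω)) / δ) • Tf (y i ω)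

/-! The empirical barycenter `m_N` is the ratio of the sample means of two functions of the
i.i.d. samples: the Gibbs weight `e^{-f(T_f y)/δ}` and `T_f y · e^{-f(T_f y)/δ}`. The lower growth
bound `C₁‖z‖^α - C₂ ≤ f z` makes both bounded, hence integrable, so by the strong law of large
numbers numerator and denominator converge almost surely, the denominator to a positive limit, and
`m_N → m_{δ,γ}`. As `m_{δ,γ}` lies in the open set `interior (Att M)`, on which `T_f` is
continuous, `T_f(m_N) → T_f(m_{δ,γ})`. -/

open ProbabilityTheory

section StrongLaw

variable {Ω α E : Type*} {mΩ : MeasurableSpace Ω} {P : Measure Ω}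
  {mα : MeasurableSpace α} {μ : Measure α} {X : ℕ → Ω → α}
  [NormedAddCommGroup E] [NormedSpace ℝ E] [CompleteSpace E] [MeasurableSpace E] [BorelSpace E]

theorem strong_law_ae_comp (hlaw : ∀ i, HasLaw (X i) μ P)
    (hindep : Pairwise fun i j => X i ⟂ᵢ[P] X j) {g : α → E} (hg : StronglyMeasurable g)
    (hgi : Integrable g μ) :
    ∀ᵐ ω ∂P, Tendsto (fun n : ℕ => (n : ℝ)⁻¹ • ∑ i ∈ Finset.range n, g (X i ω)) atTop
      (𝓝 (∫ a, g a ∂μ)) := by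
  have hint : Integrable (g ∘ X 0) P :=
    ((hlaw 0).map_eq ▸ hgi).comp_aemeasurable (hlaw 0).aemeasurable
  have h := strong_law_ae (fun i => g ∘ X i) hint
    (fun i j hij => (hindep hij).comp hg.measurable hg.measurable)
    fun i => ((hlaw i).identDistrib (hlaw 0)).comp hg.measurable
  rw [(hlaw 0).integral_comp hg.aestronglyMeasurable] at h
  exact h

theorem strong_law_ae_inv_sum_smul_sum (hlaw : ∀ i, HasLaw (X i) μ P)
    (hindep : Pairwise fun i j => X i ⟂ᵢ[P] X j) {w : α → ℝ} {g : α → E}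
    (hw : StronglyMeasurable w) (hg : StronglyMeasurable g) (hwi : Integrable w μ)
    (hgi : Integrable g μ) (hw₀ : ∫ a, w a ∂μ ≠ 0) :
    ∀ᵐ ω ∂P, Tendsto (fun n => (∑ i ∈ Finset.range n, w (X i ω))⁻¹ •
        ∑ i ∈ Finset.range n, g (X i ω)) atTop
      (𝓝 ((∫ a, w a ∂μ)⁻¹ • ∫ a, g a ∂μ)) := by
  filter_upwards [strong_law_ae_comp hlaw hindep hw hwi, strong_law_ae_comp hlaw hindep hg hgi]
    with ω hwω hgω
  refine ((hwω.inv₀ hw₀).smul hgω).congr' ?_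
  filter_upwards [eventually_ne_atTop 0] with n hn
  have hn' : (n : ℝ) ≠ 0 := Nat.cast_ne_zero.mpr hn
  rw [smul_eq_mul, mul_inv, inv_inv, smul_smul, mul_assoc, mul_comm _ (n : ℝ)⁻¹,
    ← mul_assoc, mul_inv_cancel₀ hn', one_mul]

end StrongLaw

theorem exists_forall_mul_exp_neg_mul_rpow_le {c α : ℝ} (hc : 0 < c) (hα : 0 < α) :
    ∃ K, ∀ t : ℝ, 0 ≤ t → t * Real.exp (-(c * t ^ α)) ≤ K := by
  have hlim : Tendsto (fun t : ℝ => t * Real.exp (-(c * t ^ α))) atTop (𝓝 0) := by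
    -- substitute `u = t ^ α`, so that `t = u ^ α⁻¹`
    refine ((tendsto_rpow_mul_exp_neg_mul_atTop_nhds_zero α⁻¹ c hc).comp
      (tendsto_rpow_atTop hα)).congr' ?_
    filter_upwards [eventually_ge_atTop 0] with t ht
    simp only [Function.comp_apply, neg_mul, Real.rpow_rpow_inv ht hα.ne']
  obtain ⟨T, hT⟩ := eventually_atTop.mp (hlim.eventually_le_const one_pos)
  refine ⟨max 1 T, fun t ht => ?_⟩
  rcases le_total T t with hTt | htT
  · exact (hT t hTt).trans (le_max_left _ _)
  · calc t * Real.exp (-(c * t ^ α)) ≤ t * 1 := by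
          gcongr
          rw [Real.exp_le_one_iff, neg_nonpos]
          exact mul_nonneg hc.le (Real.rpow_nonneg ht α)
      _ ≤ max 1 T := by rw [mul_one]; exact htT.trans (le_max_right _ _)

section GibbsWeight

variable {E : Type*} [NormedAddCommGroup E] {f : E → ℝ} {C₁ C₂ α δ : ℝ}

theorem exp_neg_div_le_of_rpow_le (hf : ∀ z, C₁ * ‖z‖ ^ α - C₂ ≤ f z) (hC₁ : 0 ≤ C₁)
    (hδ : 0 < δ) (z : E) : Real.exp (-f z / δ) ≤ Real.exp (C₂ / δ) := by
  have := mul_nonneg hC₁ (Real.rpow_nonneg (norm_nonneg z) α)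
  gcongr
  linarith [hf z]

theorem exists_forall_norm_exp_neg_div_smul_le [NormedSpace ℝ E]
    (hf : ∀ z, C₁ * ‖z‖ ^ α - C₂ ≤ f z) (hC₁ : 0 < C₁) (hα : 0 < α) (hδ : 0 < δ) :
    ∃ K, ∀ z : E, ‖Real.exp (-f z / δ) • z‖ ≤ K := by
  obtain ⟨K, hK⟩ := exists_forall_mul_exp_neg_mul_rpow_le (div_pos hC₁ hδ) hα
  refine ⟨Real.exp (C₂ / δ) * K, fun z => ?_⟩
  have hexp : Real.exp (-f z / δ) ≤ Real.exp (C₂ / δ) * Real.exp (-(C₁ / δ * ‖z‖ ^ α)) := by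
    rw [← Real.exp_add]
    gcongr
    calc -f z / δ ≤ (C₂ - C₁ * ‖z‖ ^ α) / δ := by gcongr; linarith [hf z]
      _ = C₂ / δ + -(C₁ / δ * ‖z‖ ^ α) := by ring
  rw [norm_smul, Real.norm_eq_abs, Real.abs_exp]
  calc Real.exp (-f z / δ) * ‖z‖
      ≤ Real.exp (C₂ / δ) * Real.exp (-(C₁ / δ * ‖z‖ ^ α)) * ‖z‖ := by gcongr
    _ = Real.exp (C₂ / δ) * (‖z‖ * Real.exp (-(C₁ / δ * ‖z‖ ^ α))) := by ring
    _ ≤ Real.exp (C₂ / δ) * K := by gcongr; exact hK _ (norm_nonneg z)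

end GibbsWeight

theorem pbh_stmt_12_general {d : ℕ} (f : Euc d → ℝ)
    (hf_cont : Continuous f)
    (Tf : Euc d → Euc d) (hTf_meas : Measurable Tf)
    (hTf_cont : ∀ M ∈ MinComps f, ContinuousOn Tf (interior (Att Tf M)))
    (C₁ C₂ C₃ α β : ℝ) (hC₁ : 0 < C₁)
    (hα : 0 < α)
    (h_growth : ∀ z : Euc d, C₁ * ‖z‖ ^ α - C₂ ≤ f z ∧ f z ≤ C₃ * (1 + ‖z‖) ^ β)
    (x : Euc d) (δ γ : ℝ) (hδ : 0 < δ)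
    (h_inside : ∃ M ∈ MinComps f, bary f Tf x δ γ ∈ interior (Att Tf M) ∧
      0 < infDist (bary f Tf x δ γ) (frontier (Att Tf M)))
    {Ω : Type} [MeasurableSpace Ω] (P : Measure Ω) [IsProbabilityMeasure P]
    (y : ℕ → Ω → Euc d) (h_meas : ∀ i, Measurable (y i))
    (h_law : ∀ i, Measure.map (y i) P = gaussMeasure x (δ * γ))
    (h_indep : ProbabilityTheory.iIndepFun y P) :
    ∀ᵐ ω ∂P, Tendsto (fun N => Tf (baryN f Tf δ y N ω)) atTop
      (𝓝 (Tf (bary f Tf x δ γ))) := by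
  obtain ⟨M, hM, hbaryM, -⟩ := h_inside
  set μ := gaussMeasure x (δ * γ)
  have hlaw : ∀ i, HasLaw (y i) μ P := fun i => ⟨(h_meas i).aemeasurable, h_law i⟩
  have : IsProbabilityMeasure μ := (hlaw 0).isProbabilityMeasure_iff.1 ‹_›
  have hlower : ∀ z, C₁ * ‖z‖ ^ α - C₂ ≤ f z := fun z => (h_growth z).1
  have hw : Measurable fun z => Real.exp (-f (Tf z) / δ) := by fun_prop
  have hg : Measurable fun z => Real.exp (-f (Tf z) / δ) • Tf z := by fun_prop
  have hwi : Integrable (fun z => Real.exp (-f (Tf z) / δ)) μ :=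
    .of_bound hw.aestronglyMeasurable _ <| ae_of_all _ fun z => by
      rw [Real.norm_eq_abs, Real.abs_exp]
      exact exp_neg_div_le_of_rpow_le hlower hC₁.le hδ (Tf z)
  obtain ⟨K, hK⟩ := exists_forall_norm_exp_neg_div_smul_le hlower hC₁ hα hδ
  have hgi : Integrable (fun z => Real.exp (-f (Tf z) / δ) • Tf z) μ :=
    .of_bound hg.aestronglyMeasurable K <| ae_of_all _ fun z => hK (Tf z)
  filter_upwards [strong_law_ae_inv_sum_smul_sum hlaw (fun i j hij => h_indep.indepFun hij)
    hw.stronglyMeasurable hg.stronglyMeasurable hwi hgi (integral_exp_pos hwi).ne'] with ω hω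
  exact ((hTf_cont M hM).continuousAt (isOpen_interior.mem_nhds hbaryM)).tendsto.comp hω

/-- Lemma C.2: if `m_{δ,γ}` lies well inside the attraction basin of
some component, then `T_f(m_{N,δ,γ}) → T_f(m_{δ,γ})` almost surely. -/
theorem pbh_stmt_12 {d : ℕ} (hd : 1 ≤ d) (f : Euc d → ℝ)
    (hf_cont : Continuous f) (hf_coercive : Tendsto f (cocompact (Euc d)) atTop)
    (h_borel : ∀ M ∈ MinComps f, MeasurableSet M)
    (h_bdd : ∀ M ∈ MinComps f, IsBounded M)
    (h_locfin : ∀ K : Set (Euc d), IsCompact K → {M | M ∈ MinComps f ∧ (M ∩ K).Nonempty}.Finite)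
    (Tf : Euc d → Euc d) (hTf_meas : Measurable Tf)
    (hTf_ae : ∀ᵐ y : Euc d, Tf y ∈ MStar f)
    (hTf_dec : ∀ y, f (Tf y) ≤ f y)
    (hTf_cont : ∀ M ∈ MinComps f, ContinuousOn Tf (interior (Att Tf M)))
    (C₁ C₂ C₃ α β : ℝ) (hC₁ : 0 < C₁) (hC₂ : 0 < C₂) (hC₃ : 0 < C₃)
    (hα : 0 < α) (hαβ : α < β)
    (h_growth : ∀ z : Euc d, C₁ * ‖z‖ ^ α - C₂ ≤ f z ∧ f z ≤ C₃ * (1 + ‖z‖) ^ β)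
    (x : Euc d) (δ γ : ℝ) (hδ : 0 < δ) (hγ : 0 < γ)
    (h_inside : ∃ M ∈ MinComps f, bary f Tf x δ γ ∈ interior (Att Tf M) ∧
      0 < infDist (bary f Tf x δ γ) (frontier (Att Tf M)))
    {Ω : Type} [MeasurableSpace Ω] (P : Measure Ω) [IsProbabilityMeasure P]
    (y : ℕ → Ω → Euc d) (h_meas : ∀ i, Measurable (y i))
    (h_law : ∀ i, Measure.map (y i) P = gaussMeasure x (δ * γ))
    (h_indep : ProbabilityTheory.iIndepFun y P) :
    ∀ᵐ ω ∂P, Tendsto (fun N => Tf (baryN f Tf δ y N ω)) atTop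
      (𝓝 (Tf (bary f Tf x δ γ))) :=
  pbh_stmt_12_general f hf_cont Tf hTf_meas hTf_cont C₁ C₂ C₃ α β hC₁ hα h_growth x δ γ hδ h_inside
    P y h_meas h_law h_indep
end
end

section
/- Let N ∈ ℕ∖{0}, let m₁,…,m_N ∈ 𝓜_*, and suppose there exists an index i_x with f(m_{i_x}) < f(m_i) for all i ≠ i_x, and a radius r_{i_x} > 0 such that the ball B(m_{i_x}, r_{i_x}) is contained in the interior of Att(M) for the component M ∈ 𝓜 containing m_{i_x} (with M = {m_{i_x}}). Set Δ := min_{i ≠ i_x} f(m_i) − f(m_{i_x}) > 0. If δ > 0 satisfies e^{−Δ/δ} ≤ r_{i_x} / ( (N−1)·max_{1≤i≤N} ‖m_i − m_{i_x}‖ ), then the weighted barycenter m_δ := ( Σ_{i=1}^N m_i·exp(−f(m_i)/δ) ) / ( Σ_{i=1}^N exp(−f(m_i)/δ) ) satisfies ‖m_δ − m_{i_x}‖ ≤ r_{i_x}, hence m_δ ∈ Att({m_{i_x}}) and T_f(m_δ) = m_{i_x}. -/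
open MeasureTheory Filter Topology Metric Set Bornology
open scoped ENNReal NNReal Classical

noncomputable section

/-! Jensen's inequality for the norm bounds the distance from the barycenter to `m ix` by the
weighted average of the distances `‖m i - m ix‖`. Since `f (m i) ≥ f (m ix) + Δ`, each weight other
than that of `m ix` is at most `exp (-Δ / δ)` times it, so the condition on `δ` makes the `N - 1`
remaining contributions add up to at most `r` times that weight. -/

open Finset

section CenterMass

variable {ι E : Type*} [SeminormedAddCommGroup E] [NormedSpace ℝ E]

theorem Finset.sum_le_of_card_mul_le {s : Finset ι} {a : ι → ℝ} {r : ℝ}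
    (hr : 0 ≤ r) (h : ∀ i ∈ s, s.card * a i ≤ r) : ∑ i ∈ s, a i ≤ r := by
  rcases s.eq_empty_or_nonempty with rfl | hs
  · simpa using hr
  have hcard : (0 : ℝ) < s.card := by exact_mod_cast hs.card_pos
  calc ∑ i ∈ s, a i ≤ ∑ _i ∈ s, r / s.card :=
        sum_le_sum fun i hi => (le_div_iff₀' hcard).2 (h i hi)
    _ = r := by rw [sum_const, nsmul_eq_mul, mul_div_cancel₀ _ hcard.ne']

theorem Finset.norm_centerMass_sub_le {t : Finset ι} {w : ι → ℝ} (hw : ∀ i ∈ t, 0 ≤ w i)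
    (ht : 0 < ∑ i ∈ t, w i) (z : ι → E) (y : E) :
    ‖t.centerMass w z - y‖ ≤ (∑ i ∈ t, w i)⁻¹ * ∑ i ∈ t, w i * ‖z i - y‖ := by
  simpa only [← dist_eq_norm, centerMass, Function.comp_def, smul_eq_mul] using
    (convexOn_dist y convex_univ).map_centerMass_le hw ht fun i _ => Set.mem_univ (z i)

theorem norm_centerMass_sub_le_of_weight_le [Fintype ι] [DecidableEq ι] {w : ι → ℝ}
    {z : ι → E} {j : ι} {ε r : ℝ} (hw : ∀ i, 0 ≤ w i) (hwj : 0 < w j)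
    (hw_le : ∀ i ≠ j, w i ≤ w j * ε)
    (hz : ∀ i, ε * (((Fintype.card ι : ℝ) - 1) * ‖z i - z j‖) ≤ r) :
    ‖univ.centerMass w z - z j‖ ≤ r := by
  have hr : 0 ≤ r := by simpa using hz j
  have hwj_le : w j ≤ ∑ i, w i := single_le_sum (fun i _ => hw i) (mem_univ j)
  have hsum : 0 < ∑ i, w i := hwj.trans_le hwj_le
  have hcard : (((univ.erase j).card : ℕ) : ℝ) = Fintype.card ι - 1 := by
    rw [card_erase_of_mem (mem_univ j), card_univ, Nat.cast_pred (Fintype.card_pos_iff.2 ⟨j⟩)]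
  have hothers : ∑ i ∈ univ.erase j, w i * ‖z i - z j‖ ≤ w j * r := by
    calc ∑ i ∈ univ.erase j, w i * ‖z i - z j‖
        ≤ ∑ i ∈ univ.erase j, w j * (ε * ‖z i - z j‖) := by
          refine sum_le_sum fun i hi => ?_
          rw [← mul_assoc]
          exact mul_le_mul_of_nonneg_right (hw_le i (ne_of_mem_erase hi)) (norm_nonneg _)
      _ = w j * ∑ i ∈ univ.erase j, ε * ‖z i - z j‖ := (mul_sum ..).symm
      _ ≤ w j * r := by
          refine mul_le_mul_of_nonneg_left (sum_le_of_card_mul_le hr fun i _ => ?_) hwj.le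
          rw [hcard]
          linarith [hz i]
  calc ‖univ.centerMass w z - z j‖ ≤ (∑ i, w i)⁻¹ * ∑ i, w i * ‖z i - z j‖ :=
        norm_centerMass_sub_le (fun i _ => hw i) hsum z (z j)
    _ = (∑ i, w i)⁻¹ * ∑ i ∈ univ.erase j, w i * ‖z i - z j‖ := by
        rw [sum_erase univ (by simp)]
    _ ≤ (∑ i, w i)⁻¹ * (w j * r) := by gcongr
    _ ≤ r := by
        rw [inv_mul_le_iff₀ hsum]
        exact mul_le_mul_of_nonneg_right hwj_le hr

end CenterMass

theorem Real.exp_neg_div_le_exp_neg_div_mul {a b Δ δ : ℝ} (hδ : 0 < δ) (h : Δ ≤ b - a) :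
    Real.exp (-b / δ) ≤ Real.exp (-a / δ) * Real.exp (-Δ / δ) := by
  rw [← Real.exp_add, Real.exp_le_exp, ← add_div, div_le_div_iff_of_pos_right hδ]
  linarith

theorem pbh_stmt_15_general {d : ℕ} (f : Euc d → ℝ) (Tf : Euc d → Euc d)
    (N : ℕ) (m : Fin N → Euc d) (ix : Fin N) (r : ℝ)
    (h_ball : closedBall (m ix) r ⊆ interior (Att Tf {m ix}))
    (Δ : ℝ) (hΔ : ∀ i, i ≠ ix → Δ ≤ f (m i) - f (m ix))
    (δ : ℝ) (hδ : 0 < δ)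
    (h_cond : ∀ i : Fin N, Real.exp (-Δ / δ) * (((N : ℝ) - 1) * ‖m i - m ix‖) ≤ r) :
    ‖((∑ i, Real.exp (-f (m i) / δ))⁻¹ • ∑ i, Real.exp (-f (m i) / δ) • m i) - m ix‖ ≤ r ∧
    ((∑ i, Real.exp (-f (m i) / δ))⁻¹ • ∑ i, Real.exp (-f (m i) / δ) • m i)
      ∈ Att Tf {m ix} ∧
    Tf ((∑ i, Real.exp (-f (m i) / δ))⁻¹ • ∑ i, Real.exp (-f (m i) / δ) • m i) = m ix := by
  have hclose : ‖univ.centerMass (fun i => Real.exp (-f (m i) / δ)) m - m ix‖ ≤ r :=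
    norm_centerMass_sub_le_of_weight_le (fun i => (Real.exp_pos _).le) (Real.exp_pos _)
      (fun i hi => Real.exp_neg_div_le_exp_neg_div_mul hδ (hΔ i hi))
      (by simpa only [Fintype.card_fin] using h_cond)
  have hatt : univ.centerMass (fun i => Real.exp (-f (m i) / δ)) m ∈ Att Tf {m ix} :=
    interior_subset (h_ball (mem_closedBall_iff_norm.2 hclose))
  exact ⟨hclose, hatt, hatt⟩

/-- Proposition B.1 in App. details: if `δ` is small enough, the
weighted barycenter of local minimizers lands in the basin of the best one. -/
theorem pbh_stmt_15 {d : ℕ} (hd : 1 ≤ d) (f : Euc d → ℝ)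
    (hf_cont : Continuous f) (hf_coercive : Tendsto f (cocompact (Euc d)) atTop)
    (h_borel : ∀ M ∈ MinComps f, MeasurableSet M)
    (h_bdd : ∀ M ∈ MinComps f, IsBounded M)
    (xstar : Euc d) (h_glob : ∀ y, f xstar ≤ f y)
    (h_uniq : ∀ y, f y = f xstar → y = xstar)
    (Tf : Euc d → Euc d) (hTf_meas : Measurable Tf)
    (hTf_ae : ∀ᵐ y : Euc d, Tf y ∈ MStar f)
    (N : ℕ) (hN : 0 < N) (m : Fin N → Euc d) (hm : ∀ i, m i ∈ MStar f)
    (ix : Fin N) (h_strict : ∀ i, i ≠ ix → f (m ix) < f (m i))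
    (r : ℝ) (hr : 0 < r)
    (h_comp : {m ix} ∈ MinComps f)
    (h_ball : closedBall (m ix) r ⊆ interior (Att Tf {m ix}))
    (Δ : ℝ) (hΔ_pos : 0 < Δ) (hΔ : ∀ i, i ≠ ix → Δ ≤ f (m i) - f (m ix))
    (δ : ℝ) (hδ : 0 < δ)
    (h_cond : ∀ i : Fin N, Real.exp (-Δ / δ) * (((N : ℝ) - 1) * ‖m i - m ix‖) ≤ r) :
    ‖((∑ i, Real.exp (-f (m i) / δ))⁻¹ • ∑ i, Real.exp (-f (m i) / δ) • m i) - m ix‖ ≤ r ∧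
    ((∑ i, Real.exp (-f (m i) / δ))⁻¹ • ∑ i, Real.exp (-f (m i) / δ) • m i)
      ∈ Att Tf {m ix} ∧
    Tf ((∑ i, Real.exp (-f (m i) / δ))⁻¹ • ∑ i, Real.exp (-f (m i) / δ) • m i) = m ix :=
  pbh_stmt_15_general f Tf N m ix r h_ball Δ hΔ δ hδ h_cond
end
end

section
/- Let x ∈ ℝ^d, γ > 0, q > 0 and r > 0, and for δ > 0 let Y_δ ∼ 𝒩(x, δγ Id). Then limsup_{δ↓0} δ·log E[ (1 + ‖Y_δ‖^q)·1{‖Y_δ‖ > r} ] ≤ −((r − ‖x‖)_+)²/(2γ). -/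
open MeasureTheory Filter Topology Metric Set Bornology
open scoped ENNReal NNReal Classical

noncomputable section

/-! On `{‖y‖ > r}` we have `‖y - x‖ ≥ a := (r - ‖x‖)₊`. The weight `1 + ‖y‖^q` costs only a
constant times `exp (ε ‖y - x‖² / (4s))`, and splitting the remaining Gaussian exponent into the
fractions `1 - ε` and `ε` bounds the tail moment under `𝒩(x, s Id)` by
`C_ε(s) · exp (-(1 - ε) a² / (2s))` times the mass of the wider Gaussian `𝒩(x, (2s/ε) Id)`.
Hence `δ log` of it is at most `-(1 - ε) a² / (2γ) + O(δ)`; then let `ε → 0`.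
A lower bound `≳ exp (-R² / (2s))`, from a unit ball inside `{‖y‖ > r}`, keeps `δ log` bounded
below, which is needed for the real-valued `limsup` not to collapse to its junk value. -/

lemma rpow_le_exp_mul {t q : ℝ} (ht : 0 ≤ t) (hq : 0 ≤ q) : t ^ q ≤ Real.exp (q * t) :=
  calc t ^ q ≤ Real.exp t ^ q := Real.rpow_le_rpow ht (by linarith [Real.add_one_le_exp t]) hq
    _ = Real.exp (q * t) := by rw [← Real.exp_mul, mul_comm]

lemma one_add_norm_rpow_le {E : Type*} [SeminormedAddCommGroup E] (x y : E) {q c : ℝ}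
    (hq : 0 ≤ q) (hc : 0 < c) :
    1 + ‖y‖ ^ q ≤ 2 * Real.exp (q * ‖x‖ + q ^ 2 / (4 * c)) * Real.exp (c * ‖y - x‖ ^ 2) := by
  have hyoung : q * ‖y - x‖ ≤ q ^ 2 / (4 * c) + c * ‖y - x‖ ^ 2 := by
    rw [div_add' _ _ _ (by positivity), le_div_iff₀ (by positivity)]
    nlinarith [sq_nonneg (2 * c * ‖y - x‖ - q)]
  have hexp : q * ‖y‖ ≤ q * ‖x‖ + q ^ 2 / (4 * c) + c * ‖y - x‖ ^ 2 := by
    nlinarith [norm_le_norm_add_norm_sub' y x]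
  calc 1 + ‖y‖ ^ q ≤ 2 * Real.exp (q * ‖y‖) := by
        linarith [rpow_le_exp_mul (norm_nonneg y) hq, Real.one_le_exp (by positivity : 0 ≤ q * ‖y‖)]
    _ ≤ 2 * Real.exp (q * ‖x‖ + q ^ 2 / (4 * c) + c * ‖y - x‖ ^ 2) := by gcongr
    _ = _ := by rw [Real.exp_add, mul_assoc]

section

variable {d : ℕ}

def gaussDensity (x : Euc d) (s : ℝ) (y : Euc d) : ℝ :=
  (2 * Real.pi * s) ^ (-(d : ℝ) / 2) * Real.exp (-‖y - x‖ ^ 2 / (2 * s))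

lemma gaussMeasure_eq_withDensity (x : Euc d) (s : ℝ) :
    gaussMeasure x s = volume.withDensity fun y => ENNReal.ofReal (gaussDensity x s y) :=
  rfl

lemma gaussDensity_nonneg (x : Euc d) {s : ℝ} (hs : 0 ≤ s) (y : Euc d) :
    0 ≤ gaussDensity x s y := by
  unfold gaussDensity; positivity

lemma continuous_gaussDensity (x : Euc d) (s : ℝ) : Continuous (gaussDensity x s) := by
  unfold gaussDensity; fun_prop

lemma setIntegral_gaussMeasure (x : Euc d) {s : ℝ} (hs : 0 ≤ s) (S : Set (Euc d))
    (g : Euc d → ℝ) :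
    ∫ y in S, g y ∂gaussMeasure x s = ∫ y in S, gaussDensity x s y * g y := by
  rw [gaussMeasure_eq_withDensity, setIntegral_withDensity_eq_setIntegral_toReal_smul' S
    (continuous_gaussDensity x s).measurable.ennreal_ofReal
    (ae_of_all _ fun _ => ENNReal.ofReal_lt_top)]
  simp only [ENNReal.toReal_ofReal (gaussDensity_nonneg x hs _), smul_eq_mul]

lemma integral_exp_neg_mul_norm_sub_sq (x : Euc d) {b : ℝ} (hb : 0 < b) :
    ∫ y, Real.exp (-b * ‖y - x‖ ^ 2) = (Real.pi / b) ^ ((d : ℝ) / 2) := by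
  rw [integral_sub_right_eq_self (fun v : Euc d => Real.exp (-b * ‖v‖ ^ 2)) x,
    GaussianFourier.integral_rexp_neg_mul_sq_norm hb, finrank_euclideanSpace_fin]

lemma integral_gaussDensity (x : Euc d) {s : ℝ} (hs : 0 < s) : ∫ y, gaussDensity x s y = 1 := by
  have hb : 0 < 1 / (2 * s) := by positivity
  have hexp : ∀ y : Euc d, -‖y - x‖ ^ 2 / (2 * s) = -(1 / (2 * s)) * ‖y - x‖ ^ 2 := fun y => by
    ring
  simp only [gaussDensity, hexp, integral_const_mul, integral_exp_neg_mul_norm_sub_sq x hb]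
  rw [div_div_eq_mul_div, div_one, show Real.pi * (2 * s) = 2 * Real.pi * s by ring,
    ← Real.rpow_add (by positivity), neg_div, neg_add_cancel, Real.rpow_zero]

lemma integrable_gaussDensity (x : Euc d) {s : ℝ} (hs : 0 < s) : Integrable (gaussDensity x s) :=
  Integrable.of_integral_ne_zero (by rw [integral_gaussDensity x hs]; exact one_ne_zero)

lemma gaussDensity_mul_one_add_rpow_le (x y : Euc d) {s q ε a : ℝ} (hs : 0 < s) (hq : 0 ≤ q)
    (hε : 0 < ε) (hε1 : ε ≤ 1) (ha : 0 ≤ a) (hay : a ≤ ‖y - x‖) :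
    gaussDensity x s y * (1 + ‖y‖ ^ q) ≤
      2 * Real.exp (q * ‖x‖ + q ^ 2 * s / ε) * (2 / ε) ^ ((d : ℝ) / 2) *
        Real.exp (-((1 - ε) * a ^ 2) / (2 * s)) * gaussDensity x (2 * s / ε) y := by
  set u := ‖y - x‖
  have hpoly := one_add_norm_rpow_le x y hq (show 0 < ε / (4 * s) by positivity)
  rw [show q ^ 2 / (4 * (ε / (4 * s))) = q ^ 2 * s / ε by field_simp] at hpoly
  have hprefactor : (2 * Real.pi * s) ^ (-(d : ℝ) / 2) =
      (2 / ε) ^ ((d : ℝ) / 2) * (2 * Real.pi * (2 * s / ε)) ^ (-(d : ℝ) / 2) := by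
    rw [show 2 * Real.pi * (2 * s / ε) = 2 * Real.pi * s * (2 / ε) by ring,
      Real.mul_rpow (x := 2 * Real.pi * s) (by positivity) (by positivity), neg_div,
      Real.rpow_neg (show 0 ≤ 2 / ε by positivity)]
    field_simp
  have hgauss : Real.exp (-u ^ 2 / (2 * s)) * Real.exp (ε / (4 * s) * u ^ 2) ≤
      Real.exp (-((1 - ε) * a ^ 2) / (2 * s)) * Real.exp (-u ^ 2 / (2 * (2 * s / ε))) := by
    rw [← Real.exp_add, ← Real.exp_add, Real.exp_le_exp]
    have hau : (1 - ε) * a ^ 2 ≤ (1 - ε) * u ^ 2 := by gcongr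
    field_simp
    nlinarith
  unfold gaussDensity at *
  calc (2 * Real.pi * s) ^ (-(d : ℝ) / 2) * Real.exp (-u ^ 2 / (2 * s)) * (1 + ‖y‖ ^ q)
      ≤ (2 * Real.pi * s) ^ (-(d : ℝ) / 2) * Real.exp (-u ^ 2 / (2 * s)) *
          (2 * Real.exp (q * ‖x‖ + q ^ 2 * s / ε) * Real.exp (ε / (4 * s) * u ^ 2)) := by
        gcongr
    _ = 2 * Real.exp (q * ‖x‖ + q ^ 2 * s / ε) * (2 * Real.pi * s) ^ (-(d : ℝ) / 2) *
          (Real.exp (-u ^ 2 / (2 * s)) * Real.exp (ε / (4 * s) * u ^ 2)) := by ring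
    _ ≤ 2 * Real.exp (q * ‖x‖ + q ^ 2 * s / ε) * (2 * Real.pi * s) ^ (-(d : ℝ) / 2) *
          (Real.exp (-((1 - ε) * a ^ 2) / (2 * s)) * Real.exp (-u ^ 2 / (2 * (2 * s / ε)))) := by
        gcongr
    _ = _ := by rw [hprefactor]; ring

lemma integrable_gaussDensity_mul_one_add_rpow (x : Euc d) {s q : ℝ} (hs : 0 < s) (hq : 0 ≤ q) :
    Integrable fun y => gaussDensity x s y * (1 + ‖y‖ ^ q) := by
  have hbound y := gaussDensity_mul_one_add_rpow_le x y hs hq one_pos le_rfl le_rfl (norm_nonneg _)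
  refine ((integrable_gaussDensity x (by positivity)).const_mul _).mono' ?_
    (ae_of_all _ fun y => (Real.norm_of_nonneg ?_).trans_le (hbound y))
  · exact ((continuous_gaussDensity x s).mul
      (continuous_const.add (continuous_norm.rpow_const fun _ => Or.inr hq))).aestronglyMeasurable
  · exact mul_nonneg (gaussDensity_nonneg x hs.le y) (by positivity)

def tailMoment (x : Euc d) (q r s : ℝ) : ℝ :=
  ∫ y in {y : Euc d | r < ‖y‖}, (1 + ‖y‖ ^ q) ∂gaussMeasure x s

lemma tailMoment_le (x : Euc d) {q s ε : ℝ} (r : ℝ) (hs : 0 < s) (hq : 0 ≤ q) (hε : 0 < ε)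
    (hε1 : ε ≤ 1) :
    tailMoment x q r s ≤ 2 * Real.exp (q * ‖x‖ + q ^ 2 * s / ε) * (2 / ε) ^ ((d : ℝ) / 2) *
      Real.exp (-((1 - ε) * max (r - ‖x‖) 0 ^ 2) / (2 * s)) := by
  set C := 2 * Real.exp (q * ‖x‖ + q ^ 2 * s / ε) * (2 / ε) ^ ((d : ℝ) / 2) *
    Real.exp (-((1 - ε) * max (r - ‖x‖) 0 ^ 2) / (2 * s))
  have hdom := (integrable_gaussDensity x (by positivity : 0 < 2 * s / ε)).const_mul C
  have hS : MeasurableSet {y : Euc d | r < ‖y‖} := measurableSet_lt measurable_const measurable_norm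
  rw [tailMoment, setIntegral_gaussMeasure x hs.le]
  calc ∫ y in {y | r < ‖y‖}, gaussDensity x s y * (1 + ‖y‖ ^ q)
      ≤ ∫ y in {y | r < ‖y‖}, C * gaussDensity x (2 * s / ε) y := by
        refine integral_mono_of_nonneg (ae_of_all _ fun y => ?_) hdom.integrableOn
          (ae_restrict_of_forall_mem hS fun y hy => ?_)
        · exact mul_nonneg (gaussDensity_nonneg x hs.le y) (by positivity)
        · refine gaussDensity_mul_one_add_rpow_le x y hs hq hε hε1 (le_max_right _ _) ?_
          refine max_le ?_ (norm_nonneg _)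
          linarith [norm_sub_norm_le y x, show r < ‖y‖ from hy]
    _ ≤ ∫ y, C * gaussDensity x (2 * s / ε) y :=
        setIntegral_le_integral hdom (ae_of_all _ fun y =>
          mul_nonneg (by positivity) (gaussDensity_nonneg x (by positivity) y))
    _ = C := by rw [integral_const_mul, integral_gaussDensity x (by positivity), mul_one]

lemma measureReal_ball_mul_le_tailMoment (x y₀ : Euc d) {q r s ρ : ℝ} (hs : 0 < s) (hq : 0 ≤ q)
    (hball : ball y₀ ρ ⊆ {y | r < ‖y‖}) :
    volume.real (ball y₀ ρ) *
        ((2 * Real.pi * s) ^ (-(d : ℝ) / 2) * Real.exp (-(‖y₀ - x‖ + ρ) ^ 2 / (2 * s))) ≤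
      tailMoment x q r s := by
  have hint := integrable_gaussDensity_mul_one_add_rpow x hs hq
  rw [tailMoment, setIntegral_gaussMeasure x hs.le, ← smul_eq_mul, ← setIntegral_const]
  calc ∫ _ in ball y₀ ρ,
        (2 * Real.pi * s) ^ (-(d : ℝ) / 2) * Real.exp (-(‖y₀ - x‖ + ρ) ^ 2 / (2 * s))
      ≤ ∫ y in ball y₀ ρ, gaussDensity x s y * (1 + ‖y‖ ^ q) := by
        refine setIntegral_mono_on (integrableOn_const measure_ball_lt_top.ne) hint.integrableOn
          measurableSet_ball fun y hy => ?_
        have hyx : ‖y - x‖ ≤ ‖y₀ - x‖ + ρ := by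
          linarith [norm_sub_le_norm_sub_add_norm_sub y y₀ x, mem_ball_iff_norm.mp hy]
        calc _ ≤ gaussDensity x s y * 1 := by
              rw [mul_one, gaussDensity]; gcongr
          _ ≤ _ := by
              gcongr
              · exact gaussDensity_nonneg x hs.le y
              · linarith [Real.rpow_nonneg (norm_nonneg y) q]
    _ ≤ ∫ y in {y | r < ‖y‖}, gaussDensity x s y * (1 + ‖y‖ ^ q) :=
        setIntegral_mono_set hint.integrableOn (ae_of_all _ fun y =>
          mul_nonneg (gaussDensity_nonneg x hs.le y) (by positivity)) hball.eventuallyLE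

lemma exists_ball_subset_norm_gt (hd : 1 ≤ d) (r : ℝ) :
    ∃ y₀ : Euc d, ball y₀ 1 ⊆ {y | r < ‖y‖} := by
  have : Nonempty (Fin d) := ⟨⟨0, hd⟩⟩
  obtain ⟨y₀, hy₀⟩ := exists_norm_eq (Euc d) (show 0 ≤ |r| + 1 by positivity)
  refine ⟨y₀, fun y hy => ?_⟩
  show r < ‖y‖
  linarith [norm_sub_norm_le y₀ y, le_abs_self r, mem_ball_iff_norm'.mp hy]

lemma tailMoment_pos (hd : 1 ≤ d) (x : Euc d) {q s : ℝ} (r : ℝ) (hs : 0 < s) (hq : 0 ≤ q) :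
    0 < tailMoment x q r s := by
  obtain ⟨y₀, hball⟩ := exists_ball_subset_norm_gt hd r
  refine lt_of_lt_of_le ?_ (measureReal_ball_mul_le_tailMoment x y₀ hs hq hball)
  have : 0 < volume.real (ball y₀ 1) :=
    ENNReal.toReal_pos (measure_ball_pos volume y₀ one_pos).ne' measure_ball_lt_top.ne
  positivity

lemma isCoboundedUnder_le_mul_log_tailMoment (hd : 1 ≤ d) (x : Euc d) {γ q : ℝ} (r : ℝ)
    (hγ : 0 < γ) (hq : 0 ≤ q) :
    IsCoboundedUnder (· ≤ ·) (𝓝[>] 0) fun δ => δ * Real.log (tailMoment x q r (δ * γ)) := by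
  obtain ⟨y₀, hball⟩ := exists_ball_subset_norm_gt hd r
  set V := volume.real (ball y₀ 1)
  have hV : 0 < V :=
    ENNReal.toReal_pos (measure_ball_pos volume y₀ one_pos).ne' measure_ball_lt_top.ne
  set R := ‖y₀ - x‖ + 1
  have hlim : Tendsto (fun δ : ℝ => δ * Real.log V - R ^ 2 / (2 * γ)) (𝓝[>] 0)
      (𝓝 (0 * Real.log V - R ^ 2 / (2 * γ))) :=
    ((continuous_id.mul continuous_const).sub continuous_const).continuousWithinAt.tendsto
  refine (hlim.isBoundedUnder_ge.mono_ge ?_).isCoboundedUnder_le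
  filter_upwards [Ioo_mem_nhdsGT (show (0 : ℝ) < 1 / (2 * Real.pi * γ) by positivity)]
    with δ ⟨hδ, hδ1⟩
  have hs : 0 < δ * γ := by positivity
  have hprefactor : 1 ≤ (2 * Real.pi * (δ * γ)) ^ (-(d : ℝ) / 2) :=
    Real.one_le_rpow_of_pos_of_le_one_of_nonpos (by positivity)
      (by rw [lt_div_iff₀ (by positivity)] at hδ1; linarith)
      (by rw [neg_div]; exact neg_nonpos.mpr (by positivity))
  have hlow : V * Real.exp (-R ^ 2 / (2 * (δ * γ))) ≤ tailMoment x q r (δ * γ) :=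
    le_trans (by gcongr; exact le_mul_of_one_le_left (by positivity) hprefactor)
      (measureReal_ball_mul_le_tailMoment x y₀ hs hq hball)
  have hlog := Real.log_le_log (by positivity) hlow
  rw [Real.log_mul hV.ne' (Real.exp_ne_zero _), Real.log_exp] at hlog
  calc δ * Real.log V - R ^ 2 / (2 * γ) = δ * (Real.log V + -R ^ 2 / (2 * (δ * γ))) := by
        field_simp; ring
    _ ≤ _ := by gcongr

lemma limsup_mul_log_tailMoment_le (hd : 1 ≤ d) (x : Euc d) {γ q ε : ℝ} (r : ℝ) (hγ : 0 < γ)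
    (hq : 0 ≤ q) (hε : 0 < ε) (hε1 : ε ≤ 1) :
    limsup (fun δ => δ * Real.log (tailMoment x q r (δ * γ))) (𝓝[>] 0) ≤
      -((1 - ε) * max (r - ‖x‖) 0 ^ 2) / (2 * γ) := by
  set C := (1 - ε) * max (r - ‖x‖) 0 ^ 2
  set v : ℝ → ℝ := fun δ =>
    δ * (Real.log 2 + q * ‖x‖ + q ^ 2 * (δ * γ) / ε + (d : ℝ) / 2 * Real.log (2 / ε)) -
      C / (2 * γ)
  have hlim : Tendsto v (𝓝[>] 0) (𝓝 (-C / (2 * γ))) := by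
    have : Continuous v := by fun_prop
    simpa [v, neg_div] using this.continuousWithinAt.tendsto (x := 0) (s := Ioi 0)
  have hle : ∀ᶠ δ in 𝓝[>] 0, δ * Real.log (tailMoment x q r (δ * γ)) ≤ v δ := by
    filter_upwards [self_mem_nhdsWithin] with δ (hδ : 0 < δ)
    have hs : 0 < δ * γ := by positivity
    have hlog := Real.log_le_log (tailMoment_pos hd x r hs hq) (tailMoment_le x r hs hq hε hε1)
    rw [Real.log_mul (by positivity) (Real.exp_ne_zero _), Real.log_mul (by positivity)
      (by positivity), Real.log_mul two_ne_zero (Real.exp_ne_zero _), Real.log_exp,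
      Real.log_exp, Real.log_rpow (by positivity)] at hlog
    calc δ * Real.log (tailMoment x q r (δ * γ))
        ≤ δ * (Real.log 2 + (q * ‖x‖ + q ^ 2 * (δ * γ) / ε) + (d : ℝ) / 2 * Real.log (2 / ε) +
            -C / (2 * (δ * γ))) := by gcongr
      _ = v δ := by simp only [v]; field_simp; ring
  exact (limsup_le_limsup hle (isCoboundedUnder_le_mul_log_tailMoment hd x r hγ hq)
    hlim.isBoundedUnder_le).trans_eq hlim.limsup_eq

end

theorem pbh_stmt_17_general {d : ℕ} (hd : 1 ≤ d) (x : Euc d) (γ : ℝ) (hγ : 0 < γ)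
    (q r : ℝ) (hq : 0 < q) :
    limsup (fun δ : ℝ => δ * Real.log
        (∫ y in {y : Euc d | r < ‖y‖}, (1 + ‖y‖ ^ q) ∂gaussMeasure x (δ * γ)))
      (𝓝[>] 0) ≤ -(max (r - ‖x‖) 0) ^ 2 / (2 * γ) := by
  have hlim : Tendsto (fun ε : ℝ => -((1 - ε) * max (r - ‖x‖) 0 ^ 2) / (2 * γ)) (𝓝[>] 0)
      (𝓝 (-(max (r - ‖x‖) 0) ^ 2 / (2 * γ))) := by
    have : Continuous fun ε : ℝ => -((1 - ε) * max (r - ‖x‖) 0 ^ 2) / (2 * γ) := by fun_prop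
    simpa [neg_div] using this.continuousWithinAt.tendsto (x := 0) (s := Ioi 0)
  refine ge_of_tendsto hlim ?_
  filter_upwards [Ioc_mem_nhdsGT (show (0 : ℝ) < 1 by norm_num)] with ε ⟨hε, hε1⟩
  exact limsup_mul_log_tailMoment_le hd x r hγ hq.le hε hε1

/-- Lemma B.5, Gaussian tail with polynomial weight. -/
theorem pbh_stmt_17 {d : ℕ} (hd : 1 ≤ d) (x : Euc d) (γ : ℝ) (hγ : 0 < γ)
    (q r : ℝ) (hq : 0 < q) (hr : 0 < r) :
    limsup (fun δ : ℝ => δ * Real.log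
        (∫ y in {y : Euc d | r < ‖y‖}, (1 + ‖y‖ ^ q) ∂gaussMeasure x (δ * γ)))
      (𝓝[>] 0) ≤ -(max (r - ‖x‖) 0) ^ 2 / (2 * γ) :=
  pbh_stmt_17_general hd x γ hγ q r hq
end
end

section
/- Let x ∈ ℝ^d and γ > 0. For every η > 0 there exists a finite subset 𝒦_η ⊂ 𝓜 such that inf_{M ∈ 𝓜∖𝒦_η} V_x(M) ≥ inf_{M ∈ 𝓜} V_x(M) + η. -/
open MeasureTheory Filter Topology Metric Set Bornology
open scoped ENNReal NNReal Classical

noncomputable section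

/-- Lemma B.2: outside a finite subfamily `𝒦_η ⊂ 𝓜`, the potential
`V_x` exceeds its infimum by at least `η`. -/
theorem pbh_stmt_18 {d : ℕ} (hd : 1 ≤ d) (f : Euc d → ℝ)
    (hf_cont : Continuous f) (hf_coercive : Tendsto f (cocompact (Euc d)) atTop)
    (h_borel : ∀ M ∈ MinComps f, MeasurableSet M)
    (h_bdd : ∀ M ∈ MinComps f, IsBounded M)
    (h_locfin : ∀ K : Set (Euc d), IsCompact K → {M | M ∈ MinComps f ∧ (M ∩ K).Nonempty}.Finite)
    (Tf : Euc d → Euc d)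
    (x : Euc d) (γ : ℝ) (hγ : 0 < γ)
    (h_ne : (MinComps f).Nonempty)
    (h_bddbelow : BddBelow (Vx f Tf x γ '' MinComps f)) :
    ∀ η : ℝ, 0 < η → ∃ 𝒦 : Set (Set (Euc d)), 𝒦 ⊆ MinComps f ∧ 𝒦.Finite ∧
      ∀ M ∈ MinComps f \ 𝒦, sInf (Vx f Tf x γ '' MinComps f) + η ≤ Vx f Tf x γ M := by
  intro η hη
  set c := sInf (Vx f Tf x γ '' MinComps f) + η with hc
  have hev : ∀ᶠ y in cocompact (Euc d), c ≤ f y :=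
    hf_coercive.eventually (eventually_ge_atTop c)
  rw [Filter.eventually_iff, Filter.mem_cocompact] at hev
  obtain ⟨t, ht, hts⟩ := hev
  refine ⟨{M | M ∈ MinComps f ∧ (M ∩ t).Nonempty}, fun M hM => hM.1, h_locfin t ht, ?_⟩
  rintro M ⟨hM, hMK⟩
  have hsub : M ⊆ tᶜ := by
    intro m hm
    by_contra h
    exact hMK ⟨hM, ⟨m, hm, not_not.mp h⟩⟩
  have hne : M.Nonempty := hM.1.nonempty
  have h1 : c ≤ fVal f M := by
    apply le_csInf (hne.image f)
    rintro _ ⟨m, hm, rfl⟩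
    exact hts (hsub hm)
  have h2 : 0 ≤ 1 / (2 * γ) * infDist x (closure (Att Tf M)) ^ 2 := by positivity
  calc sInf (Vx f Tf x γ '' MinComps f) + η = c := rfl
    _ ≤ fVal f M := h1
    _ ≤ Vx f Tf x γ M := le_add_of_nonneg_right h2
end
end
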